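/- Let A be a regular n×n max-plus matrix (n ≥ 1) with maximum cycle mean λ(A). Then A is periodic — i.e., for every x0 : Fin n → ℝ the orbit x of A from x0 admits l ≥ 0 and c ≥ 1 with x (j+c) i = λ(A)·c + x j i for all j ≥ l and all i — if and only if for every x0 : Fin n → ℝ the orbit of A from x0 is a lasso, i.e., there exist α ∈ ℝ and k ≥ l ≥ 0 with x (k+1+j) i = α + x (l+j) i for all j ≥ 0 and all i. -/

import Mathlib

/-- `A` is regular: every row contains at least one finite entry. -/
def MPRegular {n : ℕ} (A : Matrix (Fin n) (Fin n) (WithBot ℝ)) : Prop :=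
  ∀ i : Fin n, ∃ j : Fin n, A i j ≠ ⊥

/-- `μ` is the mean of some circuit of the precedence graph of `A`. -/
def IsCycleMean {n : ℕ} (A : Matrix (Fin n) (Fin n) (WithBot ℝ)) (μ : ℝ) : Prop :=
  ∃ m : ℕ, 1 ≤ m ∧ ∃ p : ℕ → Fin n, ∃ w : ℕ → ℝ,
    p m = p 0 ∧ (∀ t < m, A (p (t + 1)) (p t) = ((w t : ℝ) : WithBot ℝ)) ∧
    μ = (∑ t ∈ Finset.range m, w t) / m

/-- `lam` is the maximum cycle mean `λ(A)` of `A`. -/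
def IsMaxCycleMean {n : ℕ} (A : Matrix (Fin n) (Fin n) (WithBot ℝ)) (lam : ℝ) : Prop :=
  IsCycleMean A lam ∧ ∀ μ : ℝ, IsCycleMean A μ → μ ≤ lam

/-- The orbit of a (regular) max-plus matrix `A` from the initial vector
`x0`: `x 0 = x0` and `x (k+1) i = max_j (A i j + x k j)` (for regular `A`
this maximum is a real number, extracted with `WithBot.unbot' 0`). -/
noncomputable def mpOrbit {n : ℕ} (A : Matrix (Fin n) (Fin n) (WithBot ℝ))
    (x0 : Fin n → ℝ) : ℕ → Fin n → ℝ
  | 0 => x0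
  | k + 1 => fun i =>
      WithBot.unbotD 0 (Finset.univ.sup fun j => A i j + ((mpOrbit A x0 k j : ℝ) : WithBot ℝ))


section Aux

variable {n : ℕ} {A : Matrix (Fin n) (Fin n) (WithBot ℝ)} {lam : ℝ}

lemma mp_step (hA : MPRegular A) (x0 : Fin n → ℝ) (k : ℕ) (i : Fin n) :
    ((mpOrbit A x0 (k+1) i : ℝ) : WithBot ℝ)
      = Finset.univ.sup fun j => A i j + ((mpOrbit A x0 k j : ℝ) : WithBot ℝ) := by
  obtain ⟨j0, hj0⟩ := hA i
  have hle : A i j0 + ((mpOrbit A x0 k j0 : ℝ) : WithBot ℝ)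
      ≤ Finset.univ.sup fun j => A i j + ((mpOrbit A x0 k j : ℝ) : WithBot ℝ) :=
    Finset.le_sup (f := fun j => A i j + ((mpOrbit A x0 k j : ℝ) : WithBot ℝ)) (Finset.mem_univ j0)
  have hne : (Finset.univ.sup fun j => A i j + ((mpOrbit A x0 k j : ℝ) : WithBot ℝ)) ≠ ⊥ := by
    intro h
    rw [h, le_bot_iff, WithBot.add_eq_bot] at hle
    rcases hle with h | h
    · exact hj0 h
    · exact WithBot.coe_ne_bot h
  obtain ⟨r, hr⟩ := WithBot.ne_bot_iff_exists.mp hne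
  have hdef : mpOrbit A x0 (k+1) i
      = WithBot.unbotD 0 (Finset.univ.sup fun j => A i j + ((mpOrbit A x0 k j : ℝ) : WithBot ℝ)) := rfl
  rw [hdef, ← hr, WithBot.unbotD_coe]

lemma mp_step_le (hA : MPRegular A) (x0 : Fin n → ℝ) (k : ℕ) (i j : Fin n) (r : ℝ)
    (hr : A i j = (r : WithBot ℝ)) :
    r + mpOrbit A x0 k j ≤ mpOrbit A x0 (k+1) i := by
  have := Finset.le_sup (f := fun j => A i j + ((mpOrbit A x0 k j : ℝ) : WithBot ℝ))
    (Finset.mem_univ j)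
  beta_reduce at this
  rw [← mp_step hA, hr, ← WithBot.coe_add, WithBot.coe_le_coe] at this
  exact this

lemma mp_argmax (hn : 1 ≤ n) (hA : MPRegular A) (x0 : Fin n → ℝ) (k : ℕ) (i : Fin n) :
    ∃ j : Fin n, ∃ r : ℝ, A i j = (r : WithBot ℝ) ∧
      mpOrbit A x0 (k+1) i = r + mpOrbit A x0 k j := by
  have hne : (Finset.univ : Finset (Fin n)).Nonempty := ⟨⟨0, hn⟩, Finset.mem_univ _⟩
  obtain ⟨j, _, hj⟩ := Finset.exists_mem_eq_sup Finset.univ hne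
    (fun j => A i j + ((mpOrbit A x0 k j : ℝ) : WithBot ℝ))
  have h := mp_step hA x0 k i
  rw [hj] at h
  have hAne : A i j ≠ ⊥ := by
    intro hb
    rw [hb, WithBot.bot_add] at h
    exact WithBot.coe_ne_bot h
  obtain ⟨r, hr⟩ := WithBot.ne_bot_iff_exists.mp hAne
  refine ⟨j, r, hr.symm, ?_⟩
  rw [← hr, ← WithBot.coe_add, WithBot.coe_inj] at h
  exact h

lemma mp_shift (x0 : Fin n → ℝ) (a : ℕ) :
    ∀ b, mpOrbit A x0 (a + b) = mpOrbit A (mpOrbit A x0 a) b := by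
  intro b
  induction b with
  | zero => rfl
  | succ b ih => show mpOrbit A x0 (a+b+1) = _; funext i; simp [mpOrbit, ih]

lemma path_bound (hn : 1 ≤ n) (hmax : ∀ μ : ℝ, IsCycleMean A μ → μ ≤ lam)
    (D : ℝ) (hD : 0 ≤ D) (hK : ∀ (i j : Fin n) (r : ℝ), A i j = (r : WithBot ℝ) → r ≤ lam + D) :
    ∀ m : ℕ, ∀ p : ℕ → Fin n, ∀ w : ℕ → ℝ,
      (∀ t < m, A (p (t + 1)) (p t) = ((w t : ℝ) : WithBot ℝ)) →
      ∑ t ∈ Finset.range m, w t ≤ lam * m + n * D := by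
  intro m
  induction m using Nat.strong_induction_on with
  | _ m ih =>
    intro p w hedge
    by_cases hmn : m ≤ n
    · have hbd : ∀ t ∈ Finset.range m, w t ≤ lam + D := fun t ht =>
        hK _ _ _ (hedge t (Finset.mem_range.mp ht))
      calc ∑ t ∈ Finset.range m, w t ≤ ∑ _t ∈ Finset.range m, (lam + D) :=
            Finset.sum_le_sum hbd
        _ = m * (lam + D) := by rw [Finset.sum_const, Finset.card_range]; ring
        _ ≤ lam * m + n * D := by
            have : (m : ℝ) ≤ n := by exact_mod_cast hmn
            nlinarith
    · push_neg at hmn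
      obtain ⟨x, y, hxy, hpxy⟩ : ∃ x y : Fin (n+1), x ≠ y ∧ p x = p y := by
        have hcard : Fintype.card (Fin n) < Fintype.card (Fin (n+1)) := by simp
        obtain ⟨x, y, hxy, h⟩ := Fintype.exists_ne_map_eq_of_card_lt
          (fun t : Fin (n+1) => p t) hcard
        exact ⟨x, y, hxy, h⟩
      obtain ⟨a, b, hab, hbn, hpab⟩ : ∃ a b : ℕ, a < b ∧ b ≤ n ∧ p a = p b := by
        rcases lt_or_gt_of_ne hxy with h | h
        · exact ⟨x, y, h, Nat.lt_succ_iff.mp y.isLt, hpxy⟩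
        · exact ⟨y, x, h, Nat.lt_succ_iff.mp x.isLt, hpxy.symm⟩
      set s := b - a with hs
      have hs1 : 1 ≤ s := by omega
      have hbas : b = a + s := by omega
      have hbm : b < m := lt_of_le_of_lt hbn hmn
      have hcyc : ∑ t ∈ Finset.range s, w (a + t) ≤ lam * s := by
        have hmean : IsCycleMean A ((∑ t ∈ Finset.range s, w (a + t)) / s) := by
          refine ⟨s, hs1, fun t => p (a + t), fun t => w (a + t), ?_, ?_, rfl⟩
          · show p (a + s) = p (a + 0)
            rw [← hbas, add_zero]; exact hpab.symm
          · intro t hts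
            show A (p (a + (t + 1))) (p (a + t)) = _
            rw [show a + (t + 1) = a + t + 1 by ring]
            exact hedge (a + t) (by omega)
        have h2 := hmax _ hmean
        rw [div_le_iff₀ (by exact_mod_cast hs1 : (0:ℝ) < (s:ℝ))] at h2
        linarith
      set q : ℕ → Fin n := fun t => if t < a then p t else p (t + s) with hq
      set w2 : ℕ → ℝ := fun t => if t < a then w t else w (t + s) with hw2
      have hedge2 : ∀ t < m - s, A (q (t + 1)) (q t) = ((w2 t : ℝ) : WithBot ℝ) := by
        intro t ht
        by_cases hta : t < a
        · have hq1 : q (t + 1) = p (t + 1) := by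
            by_cases h1 : t + 1 < a
            · simp only [hq]; rw [if_pos h1]
            · have h1a : t + 1 = a := by omega
              simp only [hq]; rw [if_neg h1, h1a, ← hbas, ← hpab]
          have hq0 : q t = p t := by simp only [hq]; rw [if_pos hta]
          have hw0 : w2 t = w t := by simp only [hw2]; rw [if_pos hta]
          rw [hq1, hq0, hw0]
          exact hedge t (by omega)
        · have hq1 : q (t + 1) = p (t + 1 + s) := by
            simp only [hq]; rw [if_neg (by omega : ¬ t + 1 < a)]
          have hq0 : q t = p (t + s) := by simp only [hq]; rw [if_neg hta]
          have hw0 : w2 t = w (t + s) := by simp only [hw2]; rw [if_neg hta]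
          rw [hq1, hq0, hw0, show t + 1 + s = t + s + 1 by ring]
          exact hedge (t + s) (by omega)
      have hih := ih (m - s) (by omega) q w2 hedge2
      have hsplit : ∑ t ∈ Finset.range m, w t
          = ∑ t ∈ Finset.range (m - s), w2 t + ∑ t ∈ Finset.range s, w (a + t) := by
        have e1 : ∑ t ∈ Finset.range (m - s), w2 t
            = ∑ t ∈ Finset.range a, w t + ∑ t ∈ Finset.Ico a (m - s), w (t + s) := by
          rw [← Finset.sum_range_add_sum_Ico w2 (by omega : a ≤ m - s)]
          congr 1
          · refine Finset.sum_congr rfl fun t ht => ?_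
            have h := Finset.mem_range.mp ht
            simp only [hw2]; rw [if_pos h]
          · refine Finset.sum_congr rfl fun t ht => ?_
            have h := (Finset.mem_Ico.mp ht).1
            simp only [hw2]; rw [if_neg (by omega : ¬ t < a)]
        have e2 : ∑ t ∈ Finset.Ico a (m - s), w (t + s) = ∑ t ∈ Finset.Ico b m, w t := by
          rw [Finset.sum_Ico_eq_sum_range, Finset.sum_Ico_eq_sum_range,
            (by omega : m - s - a = m - b)]
          exact Finset.sum_congr rfl fun t _ => by rw [show a + t + s = b + t by omega]
        have e3 : ∑ t ∈ Finset.Ico a b, w t = ∑ t ∈ Finset.range s, w (a + t) := by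
          rw [Finset.sum_Ico_eq_sum_range, ← hs]
        have e4 : ∑ t ∈ Finset.range m, w t
            = ∑ t ∈ Finset.range a, w t + ∑ t ∈ Finset.Ico a b, w t
              + ∑ t ∈ Finset.Ico b m, w t := by
          rw [add_assoc, Finset.sum_Ico_consecutive w (by omega : a ≤ b) (by omega : b ≤ m),
            Finset.sum_range_add_sum_Ico w (by omega : a ≤ m)]
        rw [e4, e1, e2, e3]; ring
      have hcast : ((m - s : ℕ) : ℝ) = (m : ℝ) - s := by
        have : s ≤ m := by omega
        push_cast [this]; ring
      rw [hsplit]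
      calc ∑ t ∈ Finset.range (m - s), w2 t + ∑ t ∈ Finset.range s, w (a + t)
          ≤ (lam * (m - s : ℕ) + n * D) + lam * s := add_le_add hih hcyc
        _ = lam * m + n * D := by rw [hcast]; ring

lemma mp_lower (hA : MPRegular A) (x0 : Fin n → ℝ) (P : ℕ → Fin n) (W : ℕ → ℝ)
    (hE : ∀ t, A (P (t+1)) (P t) = ((W t : ℝ) : WithBot ℝ)) :
    ∀ s, x0 (P 0) + ∑ t ∈ Finset.range s, W t ≤ mpOrbit A x0 s (P s) := by
  intro s
  induction s with
  | zero => simp [mpOrbit]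
  | succ s ih =>
    have h := mp_step_le hA x0 s (P (s+1)) (P s) (W s) (hE s)
    rw [Finset.sum_range_succ]
    linarith

lemma mod_edges (m : ℕ) (hm : 1 ≤ m) (p : ℕ → Fin n) (w : ℕ → ℝ) (hpm : p m = p 0)
    (hedge : ∀ t < m, A (p (t + 1)) (p t) = ((w t : ℝ) : WithBot ℝ)) :
    ∀ t, A (p ((t + 1) % m)) (p (t % m)) = ((w (t % m) : ℝ) : WithBot ℝ) := by
  intro t
  have hr : t % m < m := Nat.mod_lt _ (by omega)
  have key : (t + 1) % m = (t % m + 1) % m := (Nat.mod_add_mod t m 1).symm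
  rcases (by omega : t % m + 1 = m ∨ t % m + 1 < m) with h | h
  · rw [key, h, Nat.mod_self]
    have h2 := hedge (t % m) hr
    rw [show t % m + 1 = m from h, hpm] at h2
    exact h2
  · rw [key, Nat.mod_eq_of_lt h]
    exact hedge _ hr

lemma mod_sum (m : ℕ) (w : ℕ → ℝ) :
    ∀ q : ℕ, ∑ t ∈ Finset.range (q * m), w (t % m) = q * ∑ t ∈ Finset.range m, w t := by
  intro q
  induction q with
  | zero => simp
  | succ q ih =>
    have h1 : (q + 1) * m = q * m + m := by ring
    rw [h1, ← Finset.sum_range_add_sum_Ico _ (by omega : q * m ≤ q * m + m), ih,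
      Finset.sum_Ico_eq_sum_range]
    have h2 : q * m + m - q * m = m := by omega
    rw [h2]
    have h3 : ∀ t ∈ Finset.range m, w ((q * m + t) % m) = w (t % m) := by
      intro t ht
      rw [show q * m + t = t + m * q by ring, Nat.add_mul_mod_self_left]
    rw [Finset.sum_congr rfl h3]
    have h4 : ∀ t ∈ Finset.range m, w (t % m) = w t := fun t ht => by
      rw [Nat.mod_eq_of_lt (Finset.mem_range.mp ht)]
    rw [Finset.sum_congr rfl h4]
    push_cast
    ring

lemma mp_path (hn : 1 ≤ n) (hA : MPRegular A) (x0 : Fin n → ℝ) :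
    ∀ (m : ℕ) (i : Fin n), ∃ p : ℕ → Fin n, ∃ w : ℕ → ℝ, p m = i ∧
      (∀ t < m, A (p (t + 1)) (p t) = ((w t : ℝ) : WithBot ℝ)) ∧
      mpOrbit A x0 m i = ∑ t ∈ Finset.range m, w t + x0 (p 0) := by
  intro m
  induction m with
  | zero =>
    intro i
    exact ⟨fun _ => i, fun _ => 0, rfl, fun t ht => absurd ht (by omega), by simp [mpOrbit]⟩
  | succ m ih =>
    intro i
    obtain ⟨j, r, hr, hx⟩ := mp_argmax hn hA x0 m i
    obtain ⟨p, w, hpm, hed, hsum⟩ := ih j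
    refine ⟨fun t => if t ≤ m then p t else i, fun t => if t < m then w t else r, ?_, ?_, ?_⟩
    · simp only [if_neg (by omega : ¬ m + 1 ≤ m)]
    · intro t ht
      by_cases h : t < m
      · simp only [if_pos (by omega : t + 1 ≤ m), if_pos (by omega : t ≤ m), if_pos h]
        exact hed t h
      · have htm : t = m := by omega
        subst htm
        simp only [if_neg (by omega : ¬ t + 1 ≤ t), if_pos (le_refl t), if_neg (lt_irrefl t)]
        rw [hpm]
        exact hr
    · have hp0 : (fun t => if t ≤ m then p t else i) 0 = p 0 := by
        simp only [if_pos (Nat.zero_le m)]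
      rw [Finset.sum_range_succ, if_neg (lt_irrefl m), hp0]
      have he : ∑ t ∈ Finset.range m, (if t < m then w t else r) = ∑ t ∈ Finset.range m, w t :=
        Finset.sum_congr rfl fun t ht => if_pos (Finset.mem_range.mp ht)
      rw [he, hx, hsum]
      ring

end Aux

/-- A regular max-plus linear system is periodic (every orbit admits a local
transient and cyclicity with rate `λ(A)`) iff every orbit is a lasso. -/
theorem periodic_iff_all_lassos {n : ℕ} (hn : 1 ≤ n)
    (A : Matrix (Fin n) (Fin n) (WithBot ℝ)) (hA : MPRegular A)
    (lam : ℝ) (hlam : IsMaxCycleMean A lam) :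
    (∀ x0 : Fin n → ℝ, ∃ l c : ℕ, 1 ≤ c ∧ ∀ j : ℕ, l ≤ j → ∀ i : Fin n,
        mpOrbit A x0 (j + c) i = lam * (c : ℝ) + mpOrbit A x0 j i) ↔
    (∀ x0 : Fin n → ℝ, ∃ α : ℝ, ∃ k l : ℕ, l ≤ k ∧ ∀ (j : ℕ) (i : Fin n),
        mpOrbit A x0 (k + 1 + j) i = α + mpOrbit A x0 (l + j) i) := by
  constructor
  · intro h x0
    obtain ⟨l, c, hc, hper⟩ := h x0
    refine ⟨lam * c, l + c - 1, l, by omega, ?_⟩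
    intro j i
    rw [show l + c - 1 + 1 + j = l + j + c by omega, hper (l + j) (by omega) i]
  · intro h x0
    obtain ⟨α, k, l, hlk, hlas⟩ := h x0
    set c := k + 1 - l with hcdef
    have hc : 1 ≤ c := by omega
    -- iterated lasso relation
    have hiter : ∀ (q j : ℕ) (i : Fin n),
        mpOrbit A x0 (l + j + q * c) i = q * α + mpOrbit A x0 (l + j) i := by
      intro q
      induction q with
      | zero => intro j i; simp
      | succ q ih =>
        intro j i
        have hkc : k + 1 = l + c := by omega
        rw [show l + j + (q + 1) * c = k + 1 + (j + q * c) by rw [hkc]; ring, hlas (j + q * c) i,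
          show l + (j + q * c) = l + j + q * c by omega, ih j i]
        push_cast; ring
    -- circuit with mean lam
    obtain ⟨m, hm1, p, w, hpm, hedge, hmean⟩ := hlam.1
    have hm0 : (0:ℝ) < m := by exact_mod_cast hm1
    have hS : ∑ t ∈ Finset.range m, w t = lam * m := by
      rw [hmean]; field_simp
    -- lower bound: lam * c ≤ α
    have hE := mod_edges m hm1 p w hpm hedge
    have hlow := mp_lower hA (mpOrbit A x0 l) (fun t => p (t % m)) (fun t => w (t % m)) hE (m * c)
    have hsum1 : ∑ t ∈ Finset.range (m * c), w (t % m)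
        = (c : ℝ) * (lam * m) := by
      rw [show m * c = c * m by ring, mod_sum m w c, hS]
    rw [Nat.zero_mod, Nat.mul_mod_right, hsum1, ← mp_shift x0 l (m * c)] at hlow
    have h2 := hiter m 0 (p 0)
    rw [show l + 0 + m * c = l + m * c by omega, show l + 0 = l by omega] at h2
    rw [h2] at hlow
    have hlow2 : lam * c ≤ α := by
      have h3 : (m : ℝ) * (lam * c) ≤ (m : ℝ) * α := by nlinarith
      exact le_of_mul_le_mul_left h3 hm0
    -- entry bound
    have hne1 : (Finset.univ : Finset (Fin n × Fin n)).Nonempty :=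
      ⟨(⟨0, hn⟩, ⟨0, hn⟩), Finset.mem_univ _⟩
    set K := Finset.univ.sup' hne1 (fun pr : Fin n × Fin n => WithBot.unbotD 0 (A pr.1 pr.2)) with hKdef
    set D := max (K - lam) 0 with hDdef
    have hD : 0 ≤ D := le_max_right _ _
    have hK : ∀ (i j : Fin n) (r : ℝ), A i j = (r : WithBot ℝ) → r ≤ lam + D := by
      intro i j r hr
      have h1 : WithBot.unbotD 0 (A i j) ≤ K :=
        Finset.le_sup' (fun pr : Fin n × Fin n => WithBot.unbotD 0 (A pr.1 pr.2)) (Finset.mem_univ (i, j))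
      rw [hr, WithBot.unbotD_coe] at h1
      have h2 : K - lam ≤ D := le_max_left _ _
      linarith
    -- upper bound on orbit values
    have hneF : (Finset.univ : Finset (Fin n)).Nonempty := ⟨⟨0, hn⟩, Finset.mem_univ _⟩
    set B := Finset.univ.sup' hneF (mpOrbit A x0 l) with hBdef
    have hub : ∀ (s : ℕ) (i : Fin n),
        mpOrbit A (mpOrbit A x0 l) s i ≤ lam * s + n * D + B := by
      intro s i
      obtain ⟨pp, ww, _, hed, hsum⟩ := mp_path hn hA (mpOrbit A x0 l) s i
      have hb := path_bound hn hlam.2 D hD hK s pp ww hed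
      have hB : mpOrbit A x0 l (pp 0) ≤ B := Finset.le_sup' _ (Finset.mem_univ _)
      rw [hsum]
      linarith
    -- upper bound: α ≤ lam * c
    have hup : α ≤ lam * c := by
      by_contra hcon
      push_neg at hcon
      set δ := α - lam * c with hδdef
      have hδ : 0 < δ := by linarith
      set i0 : Fin n := ⟨0, hn⟩ with hi0
      set C := (n : ℝ) * D + B - mpOrbit A x0 l i0 with hCdef
      have hbound : ∀ q : ℕ, (q : ℝ) * δ ≤ C := by
        intro q
        have h1 := hiter q 0 i0
        rw [show l + 0 + q * c = l + q * c by omega, show l + 0 = l by omega] at h1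
        have h2 := hub (q * c) i0
        rw [← mp_shift x0 l (q * c), h1] at h2
        have h3 : ((q * c : ℕ) : ℝ) = (q : ℝ) * c := by push_cast; ring
        rw [h3] at h2
        rw [hCdef, hδdef]
        nlinarith
      obtain ⟨q, hq⟩ := exists_nat_gt (C / δ)
      have h4 : C < (q : ℝ) * δ := by
        rw [div_lt_iff₀ hδ] at hq
        linarith
      linarith [hbound q]
    have hαc : α = lam * c := le_antisymm hup hlow2
    refine ⟨l, c, hc, ?_⟩
    intro j hj i
    have h1 := hiter 1 (j - l) i
    rw [show l + (j - l) + 1 * c = j + c by omega, show l + (j - l) = j by omega] at h1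
    rw [h1, hαc]
    push_cast; ring
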